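/- Let H₁ and H₂ be complex Hilbert spaces and let T : H₁ →. H₂ be a densely defined closed linear operator with adjoint T†, and suppose T has closed range. Let N : H₂ → H₂ be a map such that N α = 0 for every α orthogonal to range T, and such that for every α ∈ range T: Nα ∈ dom T†, T†(Nα) ∈ dom T, and T(T†(Nα)) = α. Then for every f ∈ dom T, the element f − T†(N(Tf)) equals the orthogonal projection of f onto ker T. -/

import Mathlib

open scoped InnerProductSpace

namespace LinearPMap

theorem apply_sub_eq_zero_of_apply_eq {R E F : Type*} [Ring R] [AddCommGroup E] [Module R E]
    [AddCommGroup F] [Module R F] {T : E →ₗ.[R] F} {f g : T.domain} (h : T g = T f) :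
    T ⟨(f : E) - g, sub_mem f.2 g.2⟩ = 0 := by
  rw [show (⟨(f : E) - g, sub_mem f.2 g.2⟩ : T.domain) = f - g from rfl, T.map_sub, h, sub_self]

theorem inner_adjoint_apply_eq_zero_of_apply_eq_zero {𝕜 E F : Type*} [RCLike 𝕜]
    [NormedAddCommGroup E] [InnerProductSpace 𝕜 E] [CompleteSpace E]
    [NormedAddCommGroup F] [InnerProductSpace 𝕜 F] {T : E →ₗ.[𝕜] F}
    (hT : Dense (T.domain : Set E)) (ψ : T†.domain) {v : T.domain} (hv : T v = 0) :
    ⟪T† ψ, (v : E)⟫_𝕜 = 0 := by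
  rw [adjoint_isFormalAdjoint hT ψ v, hv, inner_zero_right]

end LinearPMap

theorem szego_projection_formula_general
    {H₁ H₂ : Type*}
    [NormedAddCommGroup H₁] [InnerProductSpace ℂ H₁] [CompleteSpace H₁]
    [NormedAddCommGroup H₂] [InnerProductSpace ℂ H₂]
    (T : H₁ →ₗ.[ℂ] H₂)
    (hdense : Dense (T.domain : Set H₁))
    (N : H₂ → H₂)
    (hN : ∀ α ∈ Set.range (fun x : T.domain => T x),
      ∃ (h₁ : N α ∈ T.adjoint.domain) (h₂ : T.adjoint ⟨N α, h₁⟩ ∈ T.domain),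
        T ⟨T.adjoint ⟨N α, h₁⟩, h₂⟩ = α) :
    ∀ f : T.domain, ∀ h₁ : N (T f) ∈ T.adjoint.domain,
      (∃ hm : (f : H₁) - T.adjoint ⟨N (T f), h₁⟩ ∈ T.domain,
        T ⟨(f : H₁) - T.adjoint ⟨N (T f), h₁⟩, hm⟩ = 0) ∧
      (∀ v : T.domain, T v = 0 → ⟪T.adjoint ⟨N (T f), h₁⟩, (v : H₁)⟫_ℂ = 0) := by
  intro f h₁
  obtain ⟨_, _, hsolve⟩ := hN (T f) ⟨f, rfl⟩
  exact ⟨⟨_, LinearPMap.apply_sub_eq_zero_of_apply_eq hsolve⟩,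
    fun v hv => LinearPMap.inner_adjoint_apply_eq_zero_of_apply_eq_zero hdense _ hv⟩

/-- Szegő projection formula: if `T` has closed range and `N` is a solution operator for the
Laplacian `T T†` (with `N = 0` on the orthogonal complement of the range of `T`), then for every
`f ∈ dom T` the element `f − T†(N(Tf))` is the orthogonal projection of `f` onto `ker T`, i.e.
it belongs to `ker T` and `f − (f − T†(N(Tf))) = T†(N(Tf))` is orthogonal to `ker T`. -/
theorem szego_projection_formula
    {H₁ H₂ : Type*}
    [NormedAddCommGroup H₁] [InnerProductSpace ℂ H₁] [CompleteSpace H₁]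
    [NormedAddCommGroup H₂] [InnerProductSpace ℂ H₂] [CompleteSpace H₂]
    (T : H₁ →ₗ.[ℂ] H₂)
    (hdense : Dense (T.domain : Set H₁))
    (hclosed : T.IsClosed)
    (hrange : IsClosed (Set.range fun x : T.domain => T x))
    (N : H₂ → H₂)
    (hN0 : ∀ α : H₂, (∀ u : T.domain, ⟪T u, α⟫_ℂ = 0) → N α = 0)
    (hN : ∀ α ∈ Set.range (fun x : T.domain => T x),
      ∃ (h₁ : N α ∈ T.adjoint.domain) (h₂ : T.adjoint ⟨N α, h₁⟩ ∈ T.domain),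
        T ⟨T.adjoint ⟨N α, h₁⟩, h₂⟩ = α) :
    ∀ f : T.domain, ∀ h₁ : N (T f) ∈ T.adjoint.domain,
      (∃ hm : (f : H₁) - T.adjoint ⟨N (T f), h₁⟩ ∈ T.domain,
        T ⟨(f : H₁) - T.adjoint ⟨N (T f), h₁⟩, hm⟩ = 0) ∧
      (∀ v : T.domain, T v = 0 → ⟪T.adjoint ⟨N (T f), h₁⟩, (v : H₁)⟫_ℂ = 0) :=
  szego_projection_formula_general T hdense N hN
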